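/- Let d ≥ 2 and σ_d(θ) = dθ on ℝ/ℤ. If G' ⊂ ℝ/ℤ is a closed set whose convex hull G (in the closed disk) is a σ_d-periodic gap of period n (σ_dⁿ maps G' onto itself as a laminational set), then every edge of G is either preperiodic or precritical under σ_d; that is, for each edge ℓ = \overline{ab} of G, either some forward image σ_d^k(ℓ) is degenerate (σ_d^k(a) = σ_d^k(b)), or a and b are preperiodic. -/

import Mathlib

open Metric Set

noncomputable section

instance : Fact ((0:ℝ) < 1) := ⟨one_pos⟩

/-- The point on the unit circle in `ℂ` corresponding to `x ∈ ℝ/ℤ`, i.e. `exp(2πix)`. -/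
noncomputable def pt (x : AddCircle (1:ℝ)) : ℂ := (AddCircle.toCircle x : ℂ)

/-- The chord of the closed unit disk joining `pt a` and `pt b`. -/
noncomputable def chord (a b : AddCircle (1:ℝ)) : Set ℂ := segment ℝ (pt a) (pt b)

/-- The map `θ ↦ dθ` on `ℝ/ℤ`. -/
def sig (d : ℕ) (x : AddCircle (1:ℝ)) : AddCircle (1:ℝ) := d • x

/-- Two chords are linked (cross) if they are distinct and intersect in the open unit disk. -/
def Linked (a b x y : AddCircle (1:ℝ)) : Prop :=
  chord a b ≠ chord x y ∧ (chord a b ∩ chord x y ∩ Metric.ball (0:ℂ) 1).Nonempty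

/-- The representative of `x ∈ ℝ/ℤ` in `[0,1)`. -/
noncomputable def rep (x : AddCircle (1:ℝ)) : ℝ := ((AddCircle.equivIco 1 0) x : ℝ)

/-- The open positively oriented arc from `a` to `b`. -/
def arc (a b : AddCircle (1:ℝ)) : Set (AddCircle (1:ℝ)) :=
  {x | 0 < rep (x - a) ∧ rep (x - a) < rep (b - a)}

/-- The closed positively oriented arc from `a` to `b`. -/
def closedArc (a b : AddCircle (1:ℝ)) : Set (AddCircle (1:ℝ)) := arc a b ∪ {a, b}

/-- `(a,b)` is a hole of `A`: `a, b ∈ A` and the nonempty open arc `(a,b)` misses `A`. -/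
def IsHole (A : Set (AddCircle (1:ℝ))) (a b : AddCircle (1:ℝ)) : Prop :=
  a ∈ A ∧ b ∈ A ∧ (arc a b).Nonempty ∧ arc a b ∩ A = ∅

/-- The convex hull in `ℂ` of the set of circle points corresponding to `A ⊆ ℝ/ℤ`. -/
noncomputable def hull (A : Set (AddCircle (1:ℝ))) : Set ℂ := convexHull ℝ (pt '' A)

/-- `p, q, r` are distinct and in strict positive circular order. -/
def cyc (p q r : AddCircle (1:ℝ)) : Prop := 0 < rep (q - p) ∧ rep (q - p) < rep (r - p)

/-- A tuple of circle points is in (weak) positive circular order. -/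
def CircOrd {k : ℕ} [NeZero k] (v : Fin k → AddCircle (1:ℝ)) : Prop :=
  Monotone fun i => rep (v i - v 0)

/-! If no iterate of the edge `ab` collapses, then every `σ_dⁱ(ab)` is a hole of the gap
`σ_dⁱ(G)`. A hole of length `ℓ < 1/d` is mapped to one of length `dℓ`, so infinitely many of
these holes have length `≥ 1/d`. The holes of one set are pairwise disjoint arcs, so each of the
`n` gaps `σ_d^r(G)`, `r < n`, has only finitely many holes of length `≥ 1/d`. Hence
`σ_dⁱ(ab) = σ_dʲ(ab)` for some `i < j`, and both endpoints are preperiodic. -/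

open MeasureTheory Filter

lemma rep_coe (r : ℝ) : rep (r : AddCircle (1:ℝ)) = Int.fract r := by
  simp [rep, AddCircle.coe_equivIco_mk_apply]

lemma coe_rep (x : AddCircle (1:ℝ)) : ((rep x : ℝ) : AddCircle (1:ℝ)) = x :=
  (AddCircle.equivIco 1 0).symm_apply_apply x

lemma rep_nonneg (x : AddCircle (1:ℝ)) : 0 ≤ rep x := by
  rw [← coe_rep x, rep_coe]
  exact Int.fract_nonneg _

lemma rep_lt_one (x : AddCircle (1:ℝ)) : rep x < 1 := by
  rw [← coe_rep x, rep_coe]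
  exact Int.fract_lt_one _

lemma rep_injective : Function.Injective rep :=
  Function.LeftInverse.injective coe_rep

lemma rep_pos_iff {x : AddCircle (1:ℝ)} : 0 < rep x ↔ x ≠ 0 := by
  rw [(rep_nonneg x).lt_iff_ne', ne_eq, ne_eq, not_iff_not, ← rep_injective.eq_iff,
    show (0 : AddCircle (1:ℝ)) = ((0:ℝ) : AddCircle (1:ℝ)) from rfl, rep_coe, Int.fract_zero]

lemma rep_add (x y : AddCircle (1:ℝ)) : rep (x + y) = Int.fract (rep x + rep y) := by
  conv_lhs => rw [← coe_rep x, ← coe_rep y]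
  rw [← AddCircle.coe_add, rep_coe]

lemma rep_sub (x y : AddCircle (1:ℝ)) : rep (x - y) = Int.fract (rep x - rep y) := by
  conv_lhs => rw [← coe_rep x, ← coe_rep y]
  rw [← AddCircle.coe_sub, rep_coe]

lemma rep_nsmul (n : ℕ) (x : AddCircle (1:ℝ)) : rep (n • x) = Int.fract (n * rep x) := by
  conv_lhs => rw [← coe_rep x]
  rw [← AddCircle.coe_nsmul, nsmul_eq_mul, rep_coe]

lemma rep_nsmul_of_mul_lt_one {n : ℕ} {x : AddCircle (1:ℝ)} (h : n * rep x < 1) :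
    rep (n • x) = n * rep x := by
  rw [rep_nsmul, Int.fract_eq_self]
  exact ⟨by have := rep_nonneg x; positivity, h⟩

lemma rep_sub_left_endpoint_le {p q x y : AddCircle (1:ℝ)} (hx : x ∈ arc p q)
    (hy : y ∉ arc p q) : rep (x - p) ≤ rep (x - y) := by
  by_contra! h
  have hyp : rep (y - p) = rep (x - p) - rep (x - y) := by
    rw [show y - p = (x - p) - (x - y) by abel, rep_sub, Int.fract_eq_self]
    exact ⟨by linarith, by linarith [rep_lt_one (x - p), rep_nonneg (x - y)]⟩
  exact hy ⟨by rw [hyp]; linarith, by rw [hyp]; linarith [hx.2, rep_nonneg (x - y)]⟩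

lemma rep_right_endpoint_sub_le {p q x y : AddCircle (1:ℝ)} (hx : x ∈ arc p q)
    (hy : y ∉ arc p q) : rep (q - x) ≤ rep (y - x) := by
  by_contra! h
  have hqx : rep (q - x) = rep (q - p) - rep (x - p) := by
    rw [show q - x = (q - p) - (x - p) by abel, rep_sub, Int.fract_eq_self]
    exact ⟨by linarith [hx.2], by linarith [rep_lt_one (q - p), hx.1]⟩
  have hyp : rep (y - p) = rep (y - x) + rep (x - p) := by
    rw [show y - p = (y - x) + (x - p) by abel, rep_add, Int.fract_eq_self]
    exact ⟨by linarith [rep_nonneg (y - x), hx.1], by linarith [rep_lt_one (q - p)]⟩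
  exact hy ⟨by rw [hyp]; linarith [rep_nonneg (y - x), hx.1], by rw [hyp]; linarith⟩

lemma measurable_rep : Measurable rep :=
  measurable_subtype_coe.comp (AddCircle.measurableEquivIco 1 0).measurable

lemma volume_rep_preimage_Ioo {c : ℝ} (hc : c ≤ 1) :
    volume (rep ⁻¹' Ioo 0 c) = ENNReal.ofReal c := by
  have hpre : QuotientAddGroup.mk ⁻¹' (rep ⁻¹' Ioo 0 c) ∩ Ioc 0 (0 + 1) = Ioo 0 c := by
    ext r
    simp only [mem_inter_iff, mem_preimage, mem_Ioo, mem_Ioc, zero_add]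
    rw [show (QuotientAddGroup.mk r : AddCircle (1:ℝ)) = (r : AddCircle (1:ℝ)) from rfl, rep_coe]
    constructor
    · rintro ⟨⟨hr0, hrc⟩, hr, hr1⟩
      rcases hr1.lt_or_eq with hr1 | rfl
      · rw [Int.fract_eq_self.mpr ⟨hr.le, hr1⟩] at hrc
        exact ⟨hr, hrc⟩
      · simp at hr0
    · rintro ⟨hr, hrc⟩
      rw [Int.fract_eq_self.mpr ⟨hr.le, by linarith⟩]
      exact ⟨⟨hr, hrc⟩, hr, by linarith⟩
  rw [AddCircle.add_projection_respects_measure 1 0 (measurable_rep measurableSet_Ioo), hpre,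
    Real.volume_Ioo, sub_zero]

lemma arc_eq_preimage (p q : AddCircle (1:ℝ)) :
    arc p q = (fun x => x + -p) ⁻¹' (rep ⁻¹' Ioo 0 (rep (q - p))) := by
  ext x
  simp [arc, sub_eq_add_neg]

lemma measurableSet_arc (p q : AddCircle (1:ℝ)) : MeasurableSet (arc p q) := by
  rw [arc_eq_preimage]
  exact (measurable_rep measurableSet_Ioo).preimage (measurable_add_const _)

lemma volume_arc (p q : AddCircle (1:ℝ)) :
    volume (arc p q) = ENNReal.ofReal (rep (q - p)) := by
  rw [arc_eq_preimage, measure_preimage_add_right,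
    volume_rep_preimage_Ioo (rep_lt_one _).le]

lemma IsHole.notMem_arc {S : Set (AddCircle (1:ℝ))} {p q y : AddCircle (1:ℝ)}
    (h : IsHole S p q) (hy : y ∈ S) : y ∉ arc p q :=
  fun hy' => (eq_empty_iff_forall_notMem.mp h.2.2.2) y ⟨hy', hy⟩

lemma IsHole.eq_of_mem_arc {S : Set (AddCircle (1:ℝ))} {p q p' q' x : AddCircle (1:ℝ)}
    (h : IsHole S p q) (h' : IsHole S p' q') (hx : x ∈ arc p q) (hx' : x ∈ arc p' q') :
    p = p' ∧ q = q' := by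
  have hp : rep (x - p) = rep (x - p') :=
    le_antisymm (rep_sub_left_endpoint_le hx (h.notMem_arc h'.1))
      (rep_sub_left_endpoint_le hx' (h'.notMem_arc h.1))
  have hq : rep (q - x) = rep (q' - x) :=
    le_antisymm (rep_right_endpoint_sub_le hx (h.notMem_arc h'.2.1))
      (rep_right_endpoint_sub_le hx' (h'.notMem_arc h.2.1))
  exact ⟨sub_right_injective (rep_injective hp), sub_left_injective (rep_injective hq)⟩

lemma finite_setOf_isHole_le_rep (S : Set (AddCircle (1:ℝ))) {ε : ℝ} (hε : 0 < ε) :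
    {h : AddCircle (1:ℝ) × AddCircle (1:ℝ) | IsHole S h.1 h.2 ∧ ε ≤ rep (h.2 - h.1)}.Finite := by
  let holes := {h : AddCircle (1:ℝ) × AddCircle (1:ℝ) // IsHole S h.1 h.2}
  have hdisj : Pairwise (Function.onFun Disjoint fun h : holes => arc h.1.1 h.1.2) := by
    intro h h' hne
    refine Set.disjoint_left.mpr fun x hx hx' => hne ?_
    obtain ⟨h1, h2⟩ := h.2.eq_of_mem_arc h'.2 hx hx'
    exact Subtype.ext (Prod.ext h1 h2)
  have hfin := Measure.finite_const_le_meas_of_disjoint_iUnion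
    volume (ENNReal.ofReal_pos.mpr hε)
    (fun h : holes => measurableSet_arc h.1.1 h.1.2) hdisj (measure_ne_top _ _)
  refine (hfin.image Subtype.val).subset ?_
  rintro h ⟨hh, hle⟩
  refine ⟨⟨h, hh⟩, ?_, rfl⟩
  change ENNReal.ofReal ε ≤ volume (arc h.1 h.2)
  rw [volume_arc]
  exact ENNReal.ofReal_le_ofReal hle

lemma iterate_sig_sub (d i : ℕ) (x y : AddCircle (1:ℝ)) :
    (sig d)^[i] (x - y) = (sig d)^[i] x - (sig d)^[i] y := by
  induction i with
  | zero => rfl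
  | succ i ih => simp only [Function.iterate_succ_apply', ih, sig, smul_sub]

lemma frequently_inv_le_rep_iterate_sig {d : ℕ} (hd : 2 ≤ d) {x : AddCircle (1:ℝ)}
    (hx : ∀ i, (sig d)^[i] x ≠ 0) : ∃ᶠ i in atTop, (d:ℝ)⁻¹ ≤ rep ((sig d)^[i] x) := by
  have hd' : (1:ℝ) < d := by exact_mod_cast hd
  by_contra h
  obtain ⟨N, hN⟩ := eventually_atTop.mp (not_frequently.mp h)
  set c := rep ((sig d)^[N] x)
  have hgrow : ∀ k, rep ((sig d)^[N + k] x) = d ^ k * c := by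
    intro k
    induction k with
    | zero => simp [c]
    | succ k ih =>
      have hsmall : (d:ℝ) * rep ((sig d)^[N + k] x) < 1 := by
        have := mul_lt_mul_of_pos_left (not_le.mp (hN (N + k) (by omega))) (by linarith : (0:ℝ) < d)
        rwa [mul_inv_cancel₀ (by positivity)] at this
      rw [← add_assoc, Function.iterate_succ_apply', sig, rep_nsmul_of_mul_lt_one hsmall, ih,
        pow_succ]
      ring
  have hc : 0 < c := rep_pos_iff.mpr (hx N)
  obtain ⟨k, hk⟩ := pow_unbounded_of_one_lt c⁻¹ hd'
  have hbig := mul_lt_mul_of_pos_right hk hc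
  rw [inv_mul_cancel₀ hc.ne'] at hbig
  linarith [rep_lt_one ((sig d)^[N + k] x), hgrow k]

section Iterate

variable {α : Type*} {f : α → α}

lemma exists_iterate_add_eq_of_iterate_eq {x : α} {i j : ℕ} (hij : i < j)
    (h : f^[i] x = f^[j] x) : ∃ m k : ℕ, 1 ≤ k ∧ f^[m + k] x = f^[m] x :=
  ⟨i, j - i, by omega, by rw [Nat.add_sub_cancel' hij.le]; exact h.symm⟩

lemma image_iterate_mod {n : ℕ} {A : Set α} (hper : f^[n] '' A = A) (i : ℕ) :
    f^[i] '' A = f^[i % n] '' A := by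
  have hA : Function.IsPeriodicPt (Set.image f) n A := by
    rwa [Function.IsPeriodicPt, Function.IsFixedPt, ← Set.image_iterate_eq]
  rw [Set.image_iterate_eq, Set.image_iterate_eq, hA.iterate_mod_apply]

end Iterate

lemma isHole_iterate_of_forall_ne {f : AddCircle (1:ℝ) → AddCircle (1:ℝ)}
    {A : Set (AddCircle (1:ℝ))} {a b : AddCircle (1:ℝ)}
    (hhole : ∀ i : ℕ, ∀ a b, IsHole (f^[i] '' A) a b →
      f a = f b ∨ IsHole (f^[i+1] '' A) (f a) (f b))
    (hedge : IsHole A a b) (hne : ∀ k, f^[k] a ≠ f^[k] b) (i : ℕ) :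
    IsHole (f^[i] '' A) (f^[i] a) (f^[i] b) := by
  induction i with
  | zero => simpa using hedge
  | succ i ih =>
    rw [Function.iterate_succ_apply' f i a, Function.iterate_succ_apply' f i b]
    refine (hhole i _ _ ih).resolve_left ?_
    simpa only [Function.iterate_succ_apply'] using hne (i + 1)

theorem stmt_2_general (d n : ℕ) (hd : 2 ≤ d) (hn : 0 < n)
    (A : Set (AddCircle (1:ℝ)))
    (hper : (sig d)^[n] '' A = A)
    (hhole : ∀ i : ℕ, ∀ a b, IsHole ((sig d)^[i] '' A) a b →
      sig d a = sig d b ∨ IsHole ((sig d)^[i+1] '' A) (sig d a) (sig d b))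
    (a b : AddCircle (1:ℝ)) (hedge : IsHole A a b) :
    (∃ k : ℕ, (sig d)^[k] a = (sig d)^[k] b) ∨
    ((∃ m k : ℕ, 1 ≤ k ∧ (sig d)^[m + k] a = (sig d)^[m] a) ∧
     (∃ m k : ℕ, 1 ≤ k ∧ (sig d)^[m + k] b = (sig d)^[m] b)) := by
  by_cases hc : ∃ k : ℕ, (sig d)^[k] a = (sig d)^[k] b
  · exact Or.inl hc
  simp only [not_exists] at hc
  right
  set long := {i | (d:ℝ)⁻¹ ≤ rep ((sig d)^[i] b - (sig d)^[i] a)}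
  set longHoles := ⋃ r ∈ Iio n, {h : AddCircle (1:ℝ) × AddCircle (1:ℝ) |
      IsHole ((sig d)^[r] '' A) h.1 h.2 ∧ (d:ℝ)⁻¹ ≤ rep (h.2 - h.1)}
  have hlong : long.Infinite := by
    refine Nat.frequently_atTop_iff_infinite.mp ?_
    simpa only [iterate_sig_sub] using frequently_inv_le_rep_iterate_sig hd
      (x := b - a) fun i => by rw [iterate_sig_sub]; exact sub_ne_zero.mpr (Ne.symm (hc i))
  have hfin : longHoles.Finite :=
    (finite_Iio n).biUnion fun r _ => finite_setOf_isHole_le_rep _ (by positivity)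
  have hmaps : MapsTo (fun i => ((sig d)^[i] a, (sig d)^[i] b)) long longHoles := fun i hi =>
    mem_biUnion (mem_Iio.mpr (Nat.mod_lt i hn))
      ⟨image_iterate_mod hper i ▸ isHole_iterate_of_forall_ne hhole hedge hc i, hi⟩
  obtain ⟨i, -, j, -, hij, heq⟩ := hlong.exists_ne_map_eq_of_mapsTo hmaps hfin
  obtain ⟨ha, hb⟩ := Prod.ext_iff.mp heq
  rcases hij.lt_or_gt with h | h
  · exact ⟨exists_iterate_add_eq_of_iterate_eq h ha, exists_iterate_add_eq_of_iterate_eq h hb⟩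
  · exact ⟨exists_iterate_add_eq_of_iterate_eq h ha.symm,
      exists_iterate_add_eq_of_iterate_eq h hb.symm⟩

/-- every edge of a σ_d-periodic gap is preperiodic or precritical. -/
theorem stmt_2 (d n : ℕ) (hd : 2 ≤ d) (hn : 0 < n)
    (A : Set (AddCircle (1:ℝ))) (hA : IsClosed A)
    (hper : (sig d)^[n] '' A = A)
    (hdisjint : ∀ i j : ℕ, i < n → j < n → i ≠ j →
      Disjoint (intrinsicInterior ℝ (hull ((sig d)^[i] '' A)))
        (intrinsicInterior ℝ (hull ((sig d)^[j] '' A))))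
    (hhole : ∀ i : ℕ, ∀ a b, IsHole ((sig d)^[i] '' A) a b →
      sig d a = sig d b ∨ IsHole ((sig d)^[i+1] '' A) (sig d a) (sig d b))
    (a b : AddCircle (1:ℝ)) (hedge : IsHole A a b) :
    (∃ k : ℕ, (sig d)^[k] a = (sig d)^[k] b) ∨
    ((∃ m k : ℕ, 1 ≤ k ∧ (sig d)^[m + k] a = (sig d)^[m] a) ∧
     (∃ m k : ℕ, 1 ≤ k ∧ (sig d)^[m + k] b = (sig d)^[m] b)) :=
  stmt_2_general d n hd hn A hper hhole a b hedge
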